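/- arXiv:2412.18466 — 2 statements merged into one kernel-verified Lean document; each statement's English description precedes it below -/
import Mathlib

section
/- Fix n ≥ 1 and a base point z̄ ∈ X_n(M̂). Let Ω^{2n} be the set of all z ∈ X_n(M̂) such that for every t ∈ [0,1], the n-tuple (s_{z̄_i z_i}(t))_{i=1,…,n} lies in X_n(M), where s_{xy} denotes the straight segment from x to y in the chart M̂ ≅ (−1/2,1/2) × I. Then Ω^{2n} is an open, dense subset of X_n(M) and has full measure in X_n(M). -/
noncomputable section
open Set MeasureTheory

/-- The deck transformation relation defining the Möbius band: `(z,w) ↦ (z+1, -w)`. -/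
def MobRel (p q : ℝ × ℝ) : Prop :=
  ∃ n : ℤ, q.1 = p.1 + n ∧ q.2 = (-1 : ℝ) ^ n * p.2

/-- The extended (open) Möbius band `ℝ²/⟨τ⟩`. -/
def Mext : Type := Quot MobRel

instance : TopologicalSpace Mext := instTopologicalSpaceQuot

/-- Projection from the plane. -/
def piE : ℝ × ℝ → Mext := Quot.mk _

/-- The strip `ℝ × [-1/2, 1/2]`. -/
def stripS : Set (ℝ × ℝ) := {p | p.2 ∈ Icc (-(1:ℝ)/2) (1/2)}

/-- The closed Möbius band `M = (ℝ × [-1/2,1/2])/⟨τ⟩`. -/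
def Mob : Type := {x : Mext // x ∈ piE '' stripS}

instance : TopologicalSpace Mob := instTopologicalSpaceSubtype

/-- The projection `π` from the strip to the Möbius band. -/
def piM (p : ℝ × ℝ) (hp : p ∈ stripS) : Mob := ⟨piE p, ⟨p, hp, rfl⟩⟩

/-- The boundary `∂M` of the Möbius band. -/
def MobBoundary : Set Mob := {x | ∃ p ∈ stripS, piE p = x.1 ∧ |p.2| = 1/2}

/-- The interior of the Möbius band. -/
def MobInterior : Set Mob := {x | ∃ p ∈ stripS, piE p = x.1 ∧ |p.2| < 1/2}

/-- The "branch cut" `ℓ = π({1/2} × I)`. -/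
def lineL : Set Mob := {x | ∃ y ∈ Icc (-(1:ℝ)/2) (1/2), piE (1/2, y) = x.1}

/-- `M̂ = M \ ℓ`, an embedded open disc chart. -/
def Mhat : Set Mob := {x | x ∉ lineL}

instance : MeasurableSpace Mext := borel _
instance : BorelSpace Mext := ⟨rfl⟩
instance : MeasurableSpace Mob := Subtype.instMeasurableSpace

/-- A fundamental domain for the Möbius band. -/
def fundDom : Set (ℝ × ℝ) := Ico (0:ℝ) 1 ×ˢ Icc (-(1:ℝ)/2) (1/2)

/-- The measure on the Möbius band induced by the standard density form `ω`,
i.e. the push-forward of Lebesgue measure on a fundamental domain. -/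
def mobMeasure : Measure Mob :=
  Measure.comap Subtype.val ((volume.restrict fundDom).map piE)


/-- The configuration space `X_n(S)` of `n` distinct ordered points in `S`. -/
def Conf (S : Type*) [TopologicalSpace S] (n : ℕ) : Type _ :=
  {f : Fin n → S // Function.Injective f}

instance (S : Type*) [TopologicalSpace S] (n : ℕ) : TopologicalSpace (Conf S n) :=
  instTopologicalSpaceSubtype

/-- The coordinate-permutation relation on configurations. -/
def permRel (S : Type*) [TopologicalSpace S] (n : ℕ) : Conf S n → Conf S n → Prop :=
  fun f g => ∃ σ : Equiv.Perm (Fin n), f.1 = g.1 ∘ σ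

/-- The unordered configuration space `X_n(S)/𝔖_n`. -/
def UConf (S : Type*) [TopologicalSpace S] (n : ℕ) : Type _ := Quot (permRel S n)

instance (S : Type*) [TopologicalSpace S] (n : ℕ) : TopologicalSpace (UConf S n) :=
  instTopologicalSpaceQuot

/-- The canonical lift of a point of the Möbius band to the strip, with first coordinate
in `[-1/2, 1/2)`; for points of `M̂` this is the chart `M̂ ≅ (-1/2,1/2) × I`. -/
def Lift (x : Mob) : ℝ × ℝ :=
  Classical.epsilon fun p => piE p = x.1 ∧ p ∈ stripS ∧ p.1 ∈ Ico (-(1:ℝ)/2) (1/2)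

/-- Clamp the second coordinate into `[-1/2,1/2]`. -/
def clampY (y : ℝ) : ℝ := max (-(1:ℝ)/2) (min (1/2) y)

/-- Projection `ℝ² → M` (clamping the second coordinate, which is harmless for points of
the strip). -/
def toMob (p : ℝ × ℝ) : Mob :=
  ⟨piE (p.1, clampY p.2),
    ⟨(p.1, clampY p.2), ⟨le_max_left _ _, max_le (by norm_num) (min_le_left _ _)⟩, rfl⟩⟩

/-- The straight segment from `a` to `b` in the plane. -/
def seg (a b : ℝ × ℝ) (t : ℝ) : ℝ × ℝ := (1 - t) • a + t • b

/-- The set `Ω^{2n} ⊆ X_n(M)`: configurations `z ∈ X_n(M̂)` such that the tuple of straight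
segments `(s_{z̄ᵢ zᵢ}(t))ᵢ` (in the chart `M̂`) is a configuration in `X_n(M)` for all
`t ∈ [0,1]`. -/
def OmegaSet (n : ℕ) (zbar : Fin n → Mob) : Set (Conf Mob n) :=
  {z | (∀ i, z.1 i ∈ Mhat) ∧
    ∀ t ∈ Icc (0:ℝ) 1, Function.Injective fun i => toMob (seg (Lift (zbar i)) (Lift (z.1 i)) t)}

instance (n : ℕ) : MeasurableSpace (Conf Mob n) := Subtype.instMeasurableSpace

/-- The measure on the configuration space `X_n(M)` induced by the density measure on `M`. -/
def confMeasure (n : ℕ) : Measure (Conf Mob n) :=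
  Measure.comap Subtype.val (Measure.pi fun _ : Fin n => mobMeasure)


/-!
In the chart `M̂ ≅ (-1/2, 1/2) × I`, which is convex and on which the projection to `M` is
injective, `z ∈ Ω^{2n}` says that the segments from the `z̄ᵢ` to the `zᵢ`, run simultaneously,
never collide. Collisions are a closed condition on `(z, t)` and `t` ranges over the compact
`[0, 1]`, so `Ω^{2n}` is open. If the `i`-th and `j`-th segments meet at time `t`, then
`t (zᵢ - zⱼ) = (1 - t) (z̄ⱼ - z̄ᵢ)`, so `zᵢ - zⱼ` is parallel to the fixed nonzero vector
`z̄ⱼ - z̄ᵢ`: for fixed `zᵢ` this puts `zⱼ` on a line, and by Fubini such pairs form a null set.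
Together with the null cut `ℓ` this gives full measure, and full measure implies density
because the measure charges every nonempty open set.
-/

open Function Topology

lemma mobRel_equivalence : Equivalence MobRel where
  refl _ := ⟨0, by simp, by simp⟩
  symm := by
    rintro p q ⟨m, h1, h2⟩
    refine ⟨-m, by push_cast; linarith, ?_⟩
    rw [h2, ← mul_assoc, ← zpow_add₀ (by norm_num), neg_add_cancel, zpow_zero, one_mul]
  trans := by
    rintro p q r ⟨m, h1, h2⟩ ⟨k, h3, h4⟩
    refine ⟨m + k, by push_cast; linarith, ?_⟩
    rw [h4, h2, ← mul_assoc, ← zpow_add₀ (by norm_num), add_comm k]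

lemma piE_eq_piE_iff {p q : ℝ × ℝ} : piE p = piE q ↔ MobRel p q :=
  ⟨fun h => mobRel_equivalence.eqvGen_iff.mp (Quot.eqvGen_exact h), Quot.sound⟩

lemma continuous_piE : Continuous piE := continuous_quot_mk

lemma mobRel_deck (p : ℝ × ℝ) (m : ℤ) : MobRel p (p.1 + m, (-1 : ℝ) ^ m * p.2) := ⟨m, rfl, rfl⟩

lemma MobRel.eq_of_abs_sub_lt_one {p q : ℝ × ℝ} (h : MobRel p q) (hpq : |q.1 - p.1| < 1) :
    p = q := by
  obtain ⟨m, h1, h2⟩ := h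
  have hm : m = 0 := by
    rw [← Int.abs_lt_one_iff, ← Int.cast_lt (R := ℝ), Int.cast_abs]
    simpa [h1] using hpq
  subst hm
  ext <;> simp_all

lemma mem_stripS_of_mobRel {p q : ℝ × ℝ} (hp : p ∈ stripS) (h : MobRel p q) : q ∈ stripS := by
  obtain ⟨m, -, h2⟩ := h
  have hq : |q.2| = |p.2| := by rw [h2, abs_mul, abs_neg_one_zpow, one_mul]
  have hp' : |p.2| ≤ 1 / 2 := abs_le.2 (by simpa [stripS, neg_div] using hp)
  simpa [stripS, neg_div, ← abs_le, hq] using hp'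

lemma isOpenMap_piE : IsOpenMap piE := by
  intro U hU
  have : piE ⁻¹' (piE '' U) =
      ⋃ m : ℤ, (fun p : ℝ × ℝ => (p.1 - m, (-1 : ℝ) ^ m * p.2)) ⁻¹' U := by
    ext p
    simp only [mem_preimage, mem_iUnion, mem_image, piE_eq_piE_iff]
    constructor
    · rintro ⟨u, hu, m, h1, h2⟩
      refine ⟨m, ?_⟩
      convert hu using 1
      ext
      · simp [h1]
      · simp only [h2, ← mul_assoc, ← zpow_add₀ (by norm_num : (-1 : ℝ) ≠ 0), ← two_mul,
          zpow_mul]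
        simp
    · rintro ⟨m, hm⟩
      refine ⟨_, hm, m, by simp, ?_⟩
      simp only [← mul_assoc, ← zpow_add₀ (by norm_num : (-1 : ℝ) ≠ 0), ← two_mul, zpow_mul]
      simp
  show IsOpen (piE ⁻¹' (piE '' U))
  rw [this]
  exact isOpen_iUnion fun m => hU.preimage (by fun_prop)

lemma isClosed_piE_image_stripS : IsClosed (piE '' stripS) := by
  have hpre : piE ⁻¹' (piE '' stripS) = stripS := by
    refine (subset_preimage_image _ _).antisymm' ?_
    rintro p ⟨q, hq, hqp⟩
    exact mem_stripS_of_mobRel hq (piE_eq_piE_iff.1 hqp)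
  refine isQuotientMap_quot_mk.isClosed_preimage.1 ?_
  change IsClosed (piE ⁻¹' (piE '' stripS))
  rw [hpre]
  exact isClosed_Icc.preimage continuous_snd

lemma isOpenQuotientMap_piE : IsOpenQuotientMap piE :=
  ⟨Quot.exists_rep, continuous_piE, isOpenMap_piE⟩

lemma isClosed_setOf_mobRel : IsClosed {pq : (ℝ × ℝ) × (ℝ × ℝ) | MobRel pq.1 pq.2} := by
  -- `cos (π m) = (-1) ^ m` turns the integer exponent into a continuous function
  have : {pq : (ℝ × ℝ) × (ℝ × ℝ) | MobRel pq.1 pq.2} =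
      (fun pq => pq.2.1 - pq.1.1) ⁻¹' range ((↑) : ℤ → ℝ) ∩
        {pq | pq.2.2 = Real.cos ((pq.2.1 - pq.1.1) * Real.pi) * pq.1.2} := by
    ext ⟨p, q⟩
    simp only [MobRel, mem_ofPred_eq, mem_inter_iff, mem_preimage, mem_range]
    constructor
    · rintro ⟨m, h1, h2⟩
      refine ⟨⟨m, by rw [h1]; ring⟩, ?_⟩
      rw [h2, h1, add_sub_cancel_left, Real.cos_int_mul_pi]
    · rintro ⟨⟨m, hm⟩, h2⟩
      refine ⟨m, by rw [hm]; ring, ?_⟩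
      rw [h2, ← hm, Real.cos_int_mul_pi]
  rw [this]
  exact (Int.isClosedEmbedding_coe_real.isClosed_range.preimage (by fun_prop)).inter
    (isClosed_eq (by fun_prop) (by fun_prop))

instance : T2Space Mext := by
  rw [t2Space_iff_of_isOpenQuotientMap isOpenQuotientMap_piE]
  simpa only [piE_eq_piE_iff] using isClosed_setOf_mobRel

instance : SecondCountableTopology Mext :=
  isQuotientMap_quot_mk.secondCountableTopology isOpenMap_piE

instance : T2Space Mob := inferInstanceAs (T2Space (Subtype _))

instance : SecondCountableTopology Mob := inferInstanceAs (SecondCountableTopology (Subtype _))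

instance : BorelSpace Mob := Subtype.borelSpace _

lemma exists_piE_eq_fst_mem_Ico (x : Mob) (a : ℝ) :
    ∃ p ∈ stripS, piE p = x.1 ∧ p.1 ∈ Ico a (a + 1) := by
  obtain ⟨q, hq, hqx⟩ := x.2
  set m : ℤ := -⌊q.1 - a⌋
  refine ⟨_, mem_stripS_of_mobRel hq (mobRel_deck q m),
    (piE_eq_piE_iff.2 (mobRel_deck q m)).symm.trans hqx, ?_⟩
  have h0 := Int.fract_nonneg (q.1 - a)
  have h1 := Int.fract_lt_one (q.1 - a)
  rw [Int.fract] at h0 h1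
  constructor <;> simp only [m, Int.cast_neg] <;> linarith

lemma lift_spec (x : Mob) :
    piE (Lift x) = x.1 ∧ Lift x ∈ stripS ∧ (Lift x).1 ∈ Ico (-(1 : ℝ) / 2) (1 / 2) := by
  obtain ⟨p, hp, hpx, hp1⟩ := exists_piE_eq_fst_mem_Ico x (-(1 : ℝ) / 2)
  have h : ∃ p : ℝ × ℝ, piE p = x.1 ∧ p ∈ stripS ∧ p.1 ∈ Ico (-(1 : ℝ) / 2) (1 / 2) :=
    ⟨p, hpx, hp, by norm_num at hp1 ⊢; exact hp1⟩
  exact Classical.epsilon_spec h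

lemma lift_eq_of_piE_eq {x : Mob} {p : ℝ × ℝ} (hpx : piE p = x.1)
    (hp : p.1 ∈ Ico (-(1 : ℝ) / 2) (1 / 2)) : Lift x = p := by
  refine MobRel.eq_of_abs_sub_lt_one (piE_eq_piE_iff.1 ((lift_spec x).1.trans hpx.symm)) ?_
  have := (lift_spec x).2.2
  rw [abs_sub_lt_iff]
  constructor <;> linarith [hp.1, hp.2, this.1, this.2]

lemma toMob_val_of_mem_stripS {p : ℝ × ℝ} (hp : p ∈ stripS) : (toMob p).1 = piE p := by
  change piE (p.1, clampY p.2) = piE p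
  rw [clampY, min_eq_right hp.2, max_eq_right hp.1]

lemma toMob_lift (x : Mob) : toMob (Lift x) = x :=
  Subtype.ext ((toMob_val_of_mem_stripS (lift_spec x).2.1).trans (lift_spec x).1)

lemma lift_injective : Injective Lift := LeftInverse.injective toMob_lift

lemma lift_toMob {p : ℝ × ℝ} (hp : p ∈ stripS) (hp1 : p.1 ∈ Ico (-(1 : ℝ) / 2) (1 / 2)) :
    Lift (toMob p) = p :=
  lift_eq_of_piE_eq (toMob_val_of_mem_stripS hp).symm hp1

lemma mem_lineL_iff {x : Mob} : x ∈ lineL ↔ (Lift x).1 = -(1 : ℝ) / 2 := by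
  constructor
  · rintro ⟨y, -, hyx⟩
    have hrel : MobRel ((1 : ℝ) / 2, y) (-(1 : ℝ) / 2, -y) := ⟨-1, by norm_num, by norm_num⟩
    rw [lift_eq_of_piE_eq ((piE_eq_piE_iff.2 hrel).symm.trans hyx) (by norm_num)]
  · intro hx
    have hy := (lift_spec x).2.1
    refine ⟨-(Lift x).2, ⟨by linarith [hy.2], by linarith [hy.1]⟩, ?_⟩
    rw [← (lift_spec x).1, piE_eq_piE_iff]
    exact ⟨-1, by rw [hx]; norm_num, by norm_num⟩

lemma mem_Mhat_iff {x : Mob} : x ∈ Mhat ↔ (Lift x).1 ≠ -(1 : ℝ) / 2 :=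
  not_congr mem_lineL_iff

def mhatChart : Set (ℝ × ℝ) := Ioo (-(1 : ℝ) / 2) (1 / 2) ×ˢ Icc (-(1 : ℝ) / 2) (1 / 2)

lemma convex_mhatChart : Convex ℝ mhatChart := (convex_Ioo _ _).prod (convex_Icc _ _)

lemma lift_mem_mhatChart {x : Mob} (hx : x ∈ Mhat) : Lift x ∈ mhatChart :=
  ⟨⟨(lift_spec x).2.2.1.lt_of_ne' (mem_Mhat_iff.1 hx), (lift_spec x).2.2.2⟩, (lift_spec x).2.1⟩

lemma injOn_toMob_mhatChart : InjOn toMob mhatChart := fun p hp q hq h => by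
  rw [← lift_toMob hp.2 (Ioo_subset_Ico_self hp.1), h,
    lift_toMob hq.2 (Ioo_subset_Ico_self hq.1)]

lemma isOpen_Mhat_inter_lift_preimage {t : Set (ℝ × ℝ)} (ht : IsOpen t) :
    IsOpen (Mhat ∩ Lift ⁻¹' t) := by
  have : Mhat ∩ Lift ⁻¹' t =
      Subtype.val ⁻¹' (piE '' (t ∩ Prod.fst ⁻¹' Ioo (-(1 : ℝ) / 2) (1 / 2))) := by
    ext x
    constructor
    · rintro ⟨hx, hxt⟩
      exact ⟨Lift x, ⟨hxt, (lift_mem_mhatChart hx).1⟩, (lift_spec x).1⟩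
    · rintro ⟨p, ⟨hpt, hp⟩, hpx⟩
      rw [mem_inter_iff, mem_Mhat_iff, mem_preimage, lift_eq_of_piE_eq hpx (Ioo_subset_Ico_self hp)]
      exact ⟨hp.1.ne', hpt⟩
  rw [this]
  exact (isOpenMap_piE _ (ht.inter (isOpen_Ioo.preimage continuous_fst))).preimage
    continuous_subtype_val

lemma isOpen_Mhat : IsOpen Mhat := by
  simpa using isOpen_Mhat_inter_lift_preimage isOpen_univ

lemma continuousOn_lift : ContinuousOn Lift Mhat :=
  (continuousOn_open_iff isOpen_Mhat).2 fun _ => isOpen_Mhat_inter_lift_preimage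

lemma toMob_eq_iff {p : ℝ × ℝ} (hp : p ∈ stripS) {x : Mob} : toMob p = x ↔ piE p = x.1 :=
  ⟨fun h => h ▸ (toMob_val_of_mem_stripS hp).symm,
    fun h => Subtype.ext ((toMob_val_of_mem_stripS hp).trans h)⟩

lemma continuous_toMob : Continuous toMob :=
  (continuous_piE.comp (continuous_fst.prodMk
    (continuous_const.max (continuous_const.min continuous_snd)))).subtype_mk _

lemma measurableSet_fundDom : MeasurableSet fundDom := measurableSet_Ico.prod measurableSet_Icc

lemma mobMeasure_apply {s : Set Mob} (hs : MeasurableSet s) :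
    mobMeasure s = volume (toMob ⁻¹' s ∩ fundDom) := by
  have hval : MeasurableEmbedding (Subtype.val : Mob → Mext) :=
    MeasurableEmbedding.subtype_coe isClosed_piE_image_stripS.measurableSet
  rw [show mobMeasure s = _ from hval.comap_apply _ s, Measure.map_apply continuous_piE.measurable
    (hval.measurableSet_image.2 hs), Measure.restrict_apply' measurableSet_fundDom]
  congr 1
  refine Set.ext fun p => and_congr_left fun hp => ⟨?_, fun h => ⟨_, h, ?_⟩⟩
  · rintro ⟨x, hx, hxp⟩
    rwa [mem_preimage, toMob_eq_iff hp.2 |>.2 hxp.symm]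
  · exact ((toMob_eq_iff hp.2).1 rfl).symm

instance : IsProbabilityMeasure mobMeasure := by
  constructor
  rw [mobMeasure_apply MeasurableSet.univ, preimage_univ, univ_inter, fundDom,
    Measure.volume_eq_prod, Measure.prod_prod, Real.volume_Ico, Real.volume_Icc]
  norm_num

lemma fundDom_subset_closure_interior : fundDom ⊆ closure (interior fundDom) := by
  rw [fundDom, interior_prod_eq, interior_Ico, interior_Icc, closure_prod_eq,
    closure_Ioo (by norm_num), closure_Ioo (by norm_num)]
  exact prod_mono Ico_subset_Icc_self subset_rfl

instance : mobMeasure.IsOpenPosMeasure where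
  open_pos U hU := by
    rintro ⟨x, hx⟩
    obtain ⟨p, hp, hpx, hp1⟩ := exists_piE_eq_fst_mem_Ico x 0
    have hpU : p ∈ toMob ⁻¹' U := by rwa [mem_preimage, (toMob_eq_iff hp).2 hpx]
    have hpD : p ∈ fundDom := ⟨by simpa using hp1, hp⟩
    obtain ⟨q, hqU, hqD⟩ := mem_closure_iff.1 (fundDom_subset_closure_interior hpD) _
      (hU.preimage continuous_toMob) hpU
    rw [mobMeasure_apply hU.measurableSet]
    refine (lt_of_lt_of_le ?_ (measure_mono (inter_subset_inter_right _ interior_subset))).ne'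
    exact ((hU.preimage continuous_toMob).inter isOpen_interior).measure_pos _ ⟨q, hqU, hqD⟩

lemma lift_toMob_of_mem_fundDom {p : ℝ × ℝ} (hp : p ∈ fundDom) :
    Lift (toMob p) = p ∨ Lift (toMob p) = (p.1 - 1, -p.2) := by
  obtain ⟨⟨hp0, hp1⟩, hps⟩ := hp
  by_cases h : p.1 < 1 / 2
  · exact Or.inl (lift_toMob hps ⟨by linarith, h⟩)
  · refine Or.inr (lift_eq_of_piE_eq ?_ ⟨by linarith, by linarith⟩)
    rw [toMob_val_of_mem_stripS hps, piE_eq_piE_iff]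
    exact ⟨1, by push_cast; ring, by norm_num⟩

lemma volume_setOf_line {a b : ℝ} (hab : a ≠ 0 ∨ b ≠ 0) (c : ℝ) :
    volume {p : ℝ × ℝ | a * p.1 + b * p.2 = c} = 0 := by
  have hmeas : MeasurableSet {p : ℝ × ℝ | a * p.1 + b * p.2 = c} :=
    measurableSet_eq_fun (by fun_prop) measurable_const
  rw [Measure.volume_eq_prod]
  rcases hab with ha | hb
  · have hsec (y : ℝ) : volume ((fun x => (x, y)) ⁻¹' {p : ℝ × ℝ | a * p.1 + b * p.2 = c}) = 0 :=
      Set.Subsingleton.measure_zero (fun x hx x' hx' => mul_left_cancel₀ ha (by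
        simp only [mem_preimage, mem_ofPred_eq] at hx hx'; linarith)) _
    simp only [Measure.prod_apply_symm hmeas, hsec, lintegral_zero]
  · have hsec (x : ℝ) : volume (Prod.mk x ⁻¹' {p : ℝ × ℝ | a * p.1 + b * p.2 = c}) = 0 :=
      Set.Subsingleton.measure_zero (fun y hy y' hy' => mul_left_cancel₀ hb (by
        simp only [mem_preimage, mem_ofPred_eq] at hy hy'; linarith)) _
    simp only [Measure.prod_apply hmeas, hsec, lintegral_zero]

/-- On each of the two halves of the fundamental domain `Lift ∘ toMob` is an affine isometry,
so the preimage of a line is contained in two lines. -/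
lemma mobMeasure_eq_zero_of_lift_mem_line {a b c : ℝ} (hab : a ≠ 0 ∨ b ≠ 0) {s : Set Mob}
    (hs : MeasurableSet s) (hline : ∀ x ∈ s, a * (Lift x).1 + b * (Lift x).2 = c) :
    mobMeasure s = 0 := by
  have hab' : a ≠ 0 ∨ -b ≠ 0 := by rwa [neg_ne_zero]
  rw [mobMeasure_apply hs]
  refine measure_mono_null (fun p ⟨hps, hp⟩ => ?_)
    (measure_union_null (volume_setOf_line hab c) (volume_setOf_line hab' (c + a)))
  have hpl := hline _ hps
  rcases lift_toMob_of_mem_fundDom hp with h | h <;> rw [h] at hpl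
  · exact Or.inl hpl
  · exact Or.inr (by simp only [mem_ofPred_eq] at hpl ⊢; linarith)

lemma mobMeasure_lineL : mobMeasure lineL = 0 := by
  have hl : lineL = Mhatᶜ := by ext; simp [Mhat]
  refine mobMeasure_eq_zero_of_lift_mem_line (a := 1) (b := 0) (c := -(1 : ℝ) / 2)
    (Or.inl one_ne_zero) (hl ▸ isOpen_Mhat.measurableSet.compl) fun x hx => ?_
  simpa using mem_lineL_iff.1 hx

lemma isOpen_setOf_injective {ι X : Type*} [Finite ι] [TopologicalSpace X] [T2Space X] :
    IsOpen {f : ι → X | Injective f} := by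
  have : {f : ι → X | Injective f} = ⋂ i, ⋂ j, ⋂ (_ : i ≠ j), {f | f i ≠ f j} := by
    ext f
    simp only [mem_ofPred_eq, mem_iInter]
    exact ⟨fun h i j hij => h.ne hij, fun h i j => not_imp_not.1 (h i j)⟩
  rw [this]
  exact isOpen_iInter_of_finite fun i => isOpen_iInter_of_finite fun j =>
    isOpen_iInter_of_finite fun _ => isOpen_ne_fun (continuous_apply i) (continuous_apply j)

def segInjSet {ι : Type*} (a : ι → ℝ × ℝ) : Set (ι → ℝ × ℝ) :=
  {w | ∀ t ∈ Icc (0 : ℝ) 1, Injective fun i => seg (a i) (w i) t}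

lemma isOpen_segInjSet {ι : Type*} [Finite ι] (a : ι → ℝ × ℝ) : IsOpen (segInjSet a) := by
  have hbad : IsClosed
      {p : (ι → ℝ × ℝ) × Icc (0 : ℝ) 1 | ¬Injective fun i => seg (a i) (p.1 i) p.2} :=
    (isOpen_setOf_injective.preimage (by unfold seg; fun_prop)).isClosed_compl
  have : segInjSet a =
      (Prod.fst '' {p : (ι → ℝ × ℝ) × Icc (0 : ℝ) 1 |
        ¬Injective fun i => seg (a i) (p.1 i) p.2})ᶜ := by
    ext w
    simp [segInjSet]
  rw [this]
  exact (isClosedMap_fst_of_compactSpace _ hbad).isOpen_compl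

lemma seg_mem_mhatChart {a b : ℝ × ℝ} (ha : a ∈ mhatChart) (hb : b ∈ mhatChart) {t : ℝ}
    (ht : t ∈ Icc (0 : ℝ) 1) : seg a b t ∈ mhatChart :=
  convex_mhatChart ha hb (by linarith [ht.2]) ht.1 (by ring)

lemma parallel_sub_of_seg_eq {a b c d : ℝ × ℝ} (hab : a ≠ b) {t : ℝ}
    (h : seg a c t = seg b d t) : (c - d).1 * (b - a).2 = (c - d).2 * (b - a).1 := by
  have h1 := congrArg Prod.fst h
  have h2 := congrArg Prod.snd h
  simp only [seg, Prod.fst_add, Prod.snd_add, Prod.smul_fst, Prod.smul_snd, smul_eq_mul] at h1 h2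
  simp only [Prod.fst_sub, Prod.snd_sub]
  rcases eq_or_ne t 0 with rfl | ht
  · exact absurd (Prod.ext (by simpa using h1) (by simpa using h2)) hab
  · refine mul_left_cancel₀ ht ?_
    linear_combination (b.2 - a.2) * h1 - (b.1 - a.1) * h2

/-- `Ω^{2n}` as a subset of `M^n`, for base points with chart coordinates `a`. -/
def omegaPi {ι : Type*} (a : ι → ℝ × ℝ) : Set (ι → Mob) :=
  {f | (∀ i, f i ∈ Mhat) ∧ (fun i => Lift (f i)) ∈ segInjSet a}

lemma isOpen_omegaPi {ι : Type*} [Finite ι] (a : ι → ℝ × ℝ) : IsOpen (omegaPi a) := by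
  have hM : IsOpen (univ.pi fun _ : ι => Mhat) := isOpen_set_pi finite_univ fun _ _ => isOpen_Mhat
  have hL : ContinuousOn (fun f : ι → Mob => fun i => Lift (f i)) (univ.pi fun _ => Mhat) :=
    continuousOn_pi.2 fun i => continuousOn_lift.comp (continuous_apply i).continuousOn
      fun f hf => hf i (mem_univ i)
  convert hL.isOpen_inter_preimage hM (isOpen_segInjSet a) using 1
  ext f
  simp [omegaPi]

lemma omegaSet_eq {n : ℕ} {zbar : Fin n → Mob} (hhat : ∀ i, zbar i ∈ Mhat) :
    OmegaSet n zbar = Subtype.val ⁻¹' omegaPi fun i => Lift (zbar i) := by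
  ext z
  refine and_congr_right fun hz => forall₂_congr fun t ht => ?_
  exact InjOn.injective_iff _ injOn_toMob_mhatChart (range_subset_iff.2 fun i =>
    seg_mem_mhatChart (lift_mem_mhatChart (hhat i)) (lift_mem_mhatChart (hz i)) ht)

def parallelPairs (v : ℝ × ℝ) : Set (Mob × Mob) :=
  (Mhat ×ˢ Mhat) ∩ (fun xy => Lift xy.1 - Lift xy.2) ⁻¹' {w | w.1 * v.2 = w.2 * v.1}

lemma measurableSet_parallelPairs (v : ℝ × ℝ) : MeasurableSet (parallelPairs v) := by
  have hM : IsOpen (Mhat ×ˢ Mhat) := isOpen_Mhat.prod isOpen_Mhat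
  have hF : ContinuousOn (fun xy : Mob × Mob => Lift xy.1 - Lift xy.2) (Mhat ×ˢ Mhat) :=
    (continuousOn_lift.comp continuous_fst.continuousOn fun _ h => h.1).sub
      (continuousOn_lift.comp continuous_snd.continuousOn fun _ h => h.2)
  have hC : IsClosed {w : ℝ × ℝ | w.1 * v.2 = w.2 * v.1} :=
    isClosed_eq (by fun_prop) (by fun_prop)
  rw [parallelPairs, ← sdiff_compl, ← preimage_compl, ← sdiff_self_inter]
  exact hM.measurableSet.diff (hF.isOpen_inter_preimage hM hC.isOpen_compl).measurableSet

lemma mobMeasure_prod_parallelPairs {v : ℝ × ℝ} (hv : v ≠ 0) :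
    mobMeasure.prod mobMeasure (parallelPairs v) = 0 := by
  have hab : v.2 ≠ 0 ∨ -v.1 ≠ 0 := by
    by_contra! h
    exact hv (Prod.ext (neg_eq_zero.1 h.2) h.1)
  have hsec (x : Mob) : mobMeasure (Prod.mk x ⁻¹' parallelPairs v) = 0 :=
    mobMeasure_eq_zero_of_lift_mem_line (c := v.2 * (Lift x).1 - v.1 * (Lift x).2) hab
      (measurable_prodMk_left (measurableSet_parallelPairs v)) fun y ⟨_, hy⟩ => by
        simp only [mem_preimage, mem_ofPred_eq, Prod.fst_sub, Prod.snd_sub] at hy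
        linarith
  simp only [Measure.prod_apply (measurableSet_parallelPairs v), hsec, lintegral_zero]

lemma measurePreserving_pi_pair {ι α : Type*} [Fintype ι] [MeasurableSpace α] (μ : Measure α)
    [IsProbabilityMeasure μ] {i j : ι} (hij : i ≠ j) :
    MeasurePreserving (fun f : ι → α => (f i, f j)) (Measure.pi fun _ => μ) (μ.prod μ) := by
  refine ⟨by fun_prop, ?_⟩
  have hind :
      ProbabilityTheory.IndepFun (fun f : ι → α => f i) (fun f => f j) (Measure.pi fun _ => μ) :=
    (ProbabilityTheory.iIndepFun_pi (X := fun _ => id) fun _ => aemeasurable_id).indepFun hij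
  rw [(ProbabilityTheory.indepFun_iff_map_prod_eq_prod_map_map
      (measurable_pi_apply i).aemeasurable (measurable_pi_apply j).aemeasurable).1 hind,
    (measurePreserving_eval _ i).map_eq, (measurePreserving_eval _ j).map_eq]

lemma compl_omegaPi_subset {ι : Type*} {a : ι → ℝ × ℝ} (ha : Injective a) :
    (omegaPi a)ᶜ ⊆ (⋃ i, eval i ⁻¹' lineL) ∪
      ⋃ i, ⋃ j, ⋃ (_ : i ≠ j), (fun f : ι → Mob => (f i, f j)) ⁻¹' parallelPairs (a j - a i) := by
  intro f hf
  by_cases hM : ∀ i, f i ∈ Mhat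
  · simp only [omegaPi, segInjSet, mem_compl_iff, mem_ofPred_eq, not_and, not_forall] at hf
    obtain ⟨t, -, hinj⟩ := hf hM
    obtain ⟨i, j, hseg, hij⟩ :
        ∃ i j, seg (a i) (Lift (f i)) t = seg (a j) (Lift (f j)) t ∧ i ≠ j := by
      simpa [Injective] using hinj
    exact Or.inr (mem_iUnion₂.2 ⟨i, j, mem_iUnion.2
      ⟨hij, ⟨hM i, hM j⟩, parallel_sub_of_seg_eq (ha.ne hij) hseg⟩⟩)
  · obtain ⟨i, hi⟩ := not_forall.1 hM
    exact Or.inl (mem_iUnion.2 ⟨i, of_not_not hi⟩)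

lemma pi_compl_omegaPi {ι : Type*} [Fintype ι] {a : ι → ℝ × ℝ} (ha : Injective a) :
    Measure.pi (fun _ : ι => mobMeasure) (omegaPi a)ᶜ = 0 := by
  refine measure_mono_null (compl_omegaPi_subset ha) (measure_union_null ?_ ?_)
  · exact measure_iUnion_null fun i => Measure.pi_eval_preimage_null _ mobMeasure_lineL
  refine measure_iUnion_null fun i => measure_iUnion_null fun j => measure_iUnion_null fun hij => ?_
  rw [(measurePreserving_pi_pair mobMeasure hij).measure_preimage
    (measurableSet_parallelPairs _).nullMeasurableSet]
  exact mobMeasure_prod_parallelPairs (sub_ne_zero.2 (ha.ne hij).symm)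

lemma isOpenEmbedding_conf_val (S : Type*) [TopologicalSpace S] [T2Space S] (n : ℕ) :
    IsOpenEmbedding (Subtype.val : Conf S n → Fin n → S) :=
  isOpen_setOf_injective.isOpenEmbedding_subtypeVal

instance (n : ℕ) : BorelSpace (Conf Mob n) := Subtype.borelSpace _

instance (n : ℕ) : (confMeasure n).IsOpenPosMeasure :=
  Measure.IsOpenPosMeasure.comap _ (isOpenEmbedding_conf_val Mob n)

lemma confMeasure_preimage_val_eq_zero {n : ℕ} {s : Set (Fin n → Mob)}
    (hs : Measure.pi (fun _ => mobMeasure) s = 0) : confMeasure n (Subtype.val ⁻¹' s) = 0 := by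
  rw [show confMeasure n (Subtype.val ⁻¹' s) = _ from
    (isOpenEmbedding_conf_val Mob n).measurableEmbedding.comap_apply _ _]
  exact measure_mono_null (image_preimage_subset _ _) hs

theorem omegaSet_isOpen_dense_fullMeasure_general
    (n : ℕ) (zbar : Fin n → Mob)
    (hinj : Function.Injective zbar) (hhat : ∀ i, zbar i ∈ Mhat) :
    IsOpen (OmegaSet n zbar) ∧ Dense (OmegaSet n zbar) ∧
      confMeasure n (OmegaSet n zbar)ᶜ = 0 := by
  rw [omegaSet_eq hhat]
  have hnull : confMeasure n (Subtype.val ⁻¹' omegaPi fun i => Lift (zbar i))ᶜ = 0 :=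
    confMeasure_preimage_val_eq_zero (pi_compl_omegaPi (lift_injective.comp hinj))
  exact ⟨(isOpen_omegaPi _).preimage continuous_subtype_val, (confMeasure n).dense_of_ae hnull,
    hnull⟩

/-- **Statement 9.** For `n ≥ 1` and a base configuration `z̄ ∈ X_n(M̂)`, the set `Ω^{2n}`
is open and dense in `X_n(M)` and has full measure in `X_n(M)`. -/
theorem omegaSet_isOpen_dense_fullMeasure
    (n : ℕ) (hn : 1 ≤ n) (zbar : Fin n → Mob)
    (hinj : Function.Injective zbar) (hhat : ∀ i, zbar i ∈ Mhat) :
    IsOpen (OmegaSet n zbar) ∧ Dense (OmegaSet n zbar) ∧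
      confMeasure n (OmegaSet n zbar)ᶜ = 0 :=
  omegaSet_isOpen_dense_fullMeasure_general n zbar hinj hhat

end
end

section
/- For every ε with 0 < ε < 1/2, the blow-up BΔ(ε) of the ε-neighborhood of the diagonal of M × M, regarded as a subspace of the tangent bundle TM via the embedding (p,q,R) ↦ e^{d(p,q)} v_R, is compact. -/
noncomputable section
open Set MeasureTheory

/-- The Euclidean norm on `ℝ²` (the Riemannian metric of `M` comes from the Euclidean
metric of the plane). -/
def e2 (v : ℝ × ℝ) : ℝ := Real.sqrt (v.1 ^ 2 + v.2 ^ 2)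

/-- The distance on the extended Möbius band induced by the Euclidean metric. -/
def mdist (x y : Mext) : ℝ :=
  sInf {r : ℝ | ∃ a b : ℝ × ℝ, piE a = x ∧ piE b = y ∧ e2 (a - b) = r}

/-- The deck-transformation relation on `ℝ² × ℝ²` defining the tangent bundle of the
extended Möbius band (`dτ(z,w;v₁,v₂) = (z+1,-w;v₁,-v₂)`). -/
def TanRel : ((ℝ × ℝ) × (ℝ × ℝ)) → ((ℝ × ℝ) × (ℝ × ℝ)) → Prop :=
  fun a b => ∃ n : ℤ, b.1.1 = a.1.1 + n ∧ b.1.2 = (-1:ℝ) ^ n * a.1.2 ∧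
    b.2.1 = a.2.1 ∧ b.2.2 = (-1:ℝ) ^ n * a.2.2

/-- The tangent bundle of the extended Möbius band; it contains the tangent bundle `TM`
of `M` as the part with footpoint in the strip. -/
def TMext : Type := Quot TanRel

instance : TopologicalSpace TMext := instTopologicalSpaceQuot

/-- The blow-up `BΔ(ε)` of the `ε`-neighbourhood `Δ(ε)` of the diagonal, realized as a
subspace of the tangent bundle via the embedding `(p,q,R) ↦ e^{d(p,q)} v_R`: it consists of
the classes of pairs `(p,v)` with `p` in the strip, `1 ≤ |v|`, `log |v| ≤ ε`, and such that
if `|v| > 1` then the point `q = exp_p((log|v|)·v/|v|)` lies in `M`. -/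
def BDelta (ε : ℝ) : Set TMext :=
  {w | ∃ p v : ℝ × ℝ, Quot.mk TanRel (p, v) = w ∧ p ∈ stripS ∧
    1 ≤ e2 v ∧ Real.log (e2 v) ≤ ε ∧
    (1 < e2 v → p + (Real.log (e2 v) / e2 v) • v ∈ stripS)}

/-!
A point of `BΔ(ε)` lifts to a pair `(p, v)` in the plane with `p` in the strip, `1 ≤ |v| ≤ e^ε`
and the endpoint `p + (log |v| / |v|) • v` in the strip. These conditions are closed (the
endpoint is continuous on `|v| ≥ 1`) and invariant under the deck transformations, so every
point has a lift with `p.1 ∈ [0, 1]`; such lifts form a closed bounded, hence compact, set whose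
continuous image in `TMext` is `BΔ(ε)`.
-/

lemma continuous_e2 : Continuous e2 :=
  Real.continuous_sqrt.comp (by fun_prop)

lemma abs_fst_le_e2 (v : ℝ × ℝ) : |v.1| ≤ e2 v :=
  Real.abs_le_sqrt (le_add_of_nonneg_right (sq_nonneg _))

lemma abs_snd_le_e2 (v : ℝ × ℝ) : |v.2| ≤ e2 v :=
  Real.abs_le_sqrt (le_add_of_nonneg_left (sq_nonneg _))

lemma e2_mk_neg_one_zpow_mul (n : ℤ) (v : ℝ × ℝ) : e2 (v.1, (-1 : ℝ) ^ n * v.2) = e2 v := by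
  rw [e2, e2, ← sq_abs ((-1 : ℝ) ^ n * v.2), abs_mul, abs_neg_one_zpow, one_mul, sq_abs]

lemma mem_stripS_iff {p : ℝ × ℝ} : p ∈ stripS ↔ |p.2| ≤ 1 / 2 := by
  rw [stripS, mem_ofPred_eq, abs_le, mem_Icc, neg_div]

lemma isClosed_stripS : IsClosed stripS :=
  isClosed_Icc.preimage continuous_snd

def tanDeck (n : ℤ) (x : (ℝ × ℝ) × (ℝ × ℝ)) : (ℝ × ℝ) × (ℝ × ℝ) :=
  ((x.1.1 + n, (-1 : ℝ) ^ n * x.1.2), (x.2.1, (-1 : ℝ) ^ n * x.2.2))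

lemma tanRel_tanDeck (n : ℤ) (x : (ℝ × ℝ) × (ℝ × ℝ)) : TanRel x (tanDeck n x) :=
  ⟨n, rfl, rfl, rfl, rfl⟩

lemma tanDeck_mem_stripS {n : ℤ} {x : (ℝ × ℝ) × (ℝ × ℝ)} (hx : x.1 ∈ stripS) :
    (tanDeck n x).1 ∈ stripS := by
  rw [mem_stripS_iff] at hx ⊢
  rwa [tanDeck, abs_mul, abs_neg_one_zpow, one_mul]

/-- The point `exp_p ((log |v|) v / |v|)` reached from the footpoint `p = x.1` along `v = x.2`. -/
def endpoint (x : (ℝ × ℝ) × (ℝ × ℝ)) : ℝ × ℝ :=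
  x.1 + (Real.log (e2 x.2) / e2 x.2) • x.2

lemma endpoint_tanDeck (n : ℤ) (x : (ℝ × ℝ) × (ℝ × ℝ)) :
    endpoint (tanDeck n x) = (tanDeck n (endpoint x, 0)).1 := by
  simp only [endpoint, tanDeck, e2_mk_neg_one_zpow_mul, Prod.ext_iff, Prod.fst_add,
    Prod.snd_add, Prod.smul_fst, Prod.smul_snd, smul_eq_mul]
  constructor <;> ring

lemma continuousOn_endpoint : ContinuousOn endpoint {x | 1 ≤ e2 x.2} := by
  have he2 : Continuous fun x : (ℝ × ℝ) × (ℝ × ℝ) => e2 x.2 := continuous_e2.comp continuous_snd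
  have hne : ∀ x ∈ {x : (ℝ × ℝ) × (ℝ × ℝ) | 1 ≤ e2 x.2}, e2 x.2 ≠ 0 :=
    fun x hx => (one_pos.trans_le hx).ne'
  exact continuousOn_fst.add
    (((Real.continuousOn_log.comp he2.continuousOn hne).div he2.continuousOn hne).smul
      continuousOn_snd)

def liftBDelta (ε : ℝ) : Set ((ℝ × ℝ) × (ℝ × ℝ)) :=
  {x | x.1 ∈ stripS ∧ 1 ≤ e2 x.2 ∧ e2 x.2 ≤ Real.exp ε ∧ endpoint x ∈ stripS}

lemma isClosed_liftBDelta (ε : ℝ) : IsClosed (liftBDelta ε) := by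
  have he2 : Continuous fun x : (ℝ × ℝ) × (ℝ × ℝ) => e2 x.2 := continuous_e2.comp continuous_snd
  have hendpoint : IsClosed ({x : (ℝ × ℝ) × (ℝ × ℝ) | 1 ≤ e2 x.2} ∩ endpoint ⁻¹' stripS) :=
    continuousOn_endpoint.preimage_isClosed_of_isClosed (isClosed_le continuous_const he2)
      isClosed_stripS
  convert ((isClosed_stripS.preimage continuous_fst).inter
    (isClosed_le he2 continuous_const)).inter hendpoint using 1
  ext x
  simp only [liftBDelta, mem_inter_iff, mem_preimage, mem_ofPred_eq]
  tauto

lemma isCompact_liftBDelta_inter (ε : ℝ) :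
    IsCompact (liftBDelta ε ∩ {x | x.1.1 ∈ Icc 0 1}) := by
  set E := Real.exp ε
  refine ((isCompact_Icc.prod isCompact_Icc).prod (isCompact_Icc.prod isCompact_Icc)
    : IsCompact ((Icc (0 : ℝ) 1 ×ˢ Icc (-(1 : ℝ) / 2) (1 / 2)) ×ˢ (Icc (-E) E ×ˢ Icc (-E) E)))
    |>.of_isClosed_subset ((isClosed_liftBDelta ε).inter
      (isClosed_Icc.preimage continuous_fst.fst)) ?_
  rintro ⟨p, v⟩ ⟨⟨hp, -, hvE, -⟩, hp₁⟩
  exact ⟨⟨hp₁, hp⟩, abs_le.mp ((abs_fst_le_e2 v).trans hvE),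
    abs_le.mp ((abs_snd_le_e2 v).trans hvE)⟩

lemma tanDeck_mem_liftBDelta {ε : ℝ} {x : (ℝ × ℝ) × (ℝ × ℝ)} (n : ℤ) (hx : x ∈ liftBDelta ε) :
    tanDeck n x ∈ liftBDelta ε := by
  obtain ⟨hp, hv₁, hvε, hq⟩ := hx
  have he2 : e2 (tanDeck n x).2 = e2 x.2 := e2_mk_neg_one_zpow_mul n x.2
  refine ⟨tanDeck_mem_stripS hp, he2 ▸ hv₁, he2 ▸ hvε, ?_⟩
  rw [endpoint_tanDeck]
  exact tanDeck_mem_stripS hq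

lemma bDelta_eq_image_liftBDelta (ε : ℝ) : BDelta ε = Quot.mk TanRel '' liftBDelta ε := by
  ext w
  constructor
  · rintro ⟨p, v, rfl, hp, hv₁, hvε, hq⟩
    refine ⟨(p, v), ⟨hp, hv₁, (Real.log_le_iff_le_exp (one_pos.trans_le hv₁)).mp hvε, ?_⟩, rfl⟩
    rcases hv₁.eq_or_lt with hv | hv
    · -- for `|v| = 1` the endpoint is `p` itself
      simpa [endpoint, ← hv] using hp
    · exact hq hv
  · rintro ⟨⟨p, v⟩, ⟨hp, hv₁, hvε, hq⟩, rfl⟩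
    exact ⟨p, v, rfl, hp, hv₁, (Real.log_le_iff_le_exp (one_pos.trans_le hv₁)).mpr hvε,
      fun _ => hq⟩

lemma image_liftBDelta_eq_image_inter (ε : ℝ) :
    Quot.mk TanRel '' liftBDelta ε = Quot.mk TanRel '' (liftBDelta ε ∩ {x | x.1.1 ∈ Icc 0 1}) := by
  refine (image_mono inter_subset_left).antisymm' ?_
  rintro _ ⟨x, hx, rfl⟩
  have hfract : (tanDeck (-⌊x.1.1⌋) x).1.1 = Int.fract x.1.1 := by
    rw [tanDeck, Int.cast_neg, ← sub_eq_add_neg, Int.self_sub_floor]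
  refine ⟨tanDeck (-⌊x.1.1⌋) x, ⟨tanDeck_mem_liftBDelta _ hx, ?_⟩,
    (Quot.sound (tanRel_tanDeck _ x)).symm⟩
  rw [mem_ofPred_eq, hfract]
  exact ⟨Int.fract_nonneg _, (Int.fract_lt_one _).le⟩

theorem bDelta_isCompact_general (ε : ℝ) :
    IsCompact (BDelta ε) := by
  rw [bDelta_eq_image_liftBDelta, image_liftBDelta_eq_image_inter]
  exact (isCompact_liftBDelta_inter ε).image continuous_quot_mk

/-- **Statement 10.** For every `0 < ε < 1/2`, the blow-up `BΔ(ε)` of the `ε`-neighbourhood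
of the diagonal of `M × M`, regarded as a subspace of the tangent bundle `TM` via the
embedding `(p,q,R) ↦ e^{d(p,q)} v_R`, is compact. -/
theorem bDelta_isCompact (ε : ℝ) (hε0 : 0 < ε) (hε : ε < 1/2) :
    IsCompact (BDelta ε) :=
  bDelta_isCompact_general ε

end
end
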